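/- arXiv:2503.12433 — 7 statements merged into one kernel-verified Lean document; each statement's English description precedes it below -/
import Mathlib

section
/- Let r ≥ 1 and let M_1,…,M_r, N_1,…,N_r ∈ ℂ^{n×n} with every N_i invertible, and set Π = M_r N_r^{−1} M_{r−1} N_{r−1}^{−1} ⋯ M_1 N_1^{−1}. Define the rn×rn pencil Q₁(λ), with r×r block structure of n×n blocks, by: the (i,i) block is λ·M_{r+1−i} for i = 1,…,r, the (i+1,i) block is −N_{r+1−i} for i = 1,…,r−1, the (1,r) block is −N_1, and all other blocks are zero. Then det Q₁(0) ≠ 0 (in particular Q₁ is a regular pencil), and for every nonzero λ₀ ∈ ℂ one has det Q₁(λ₀) = 0 if and only if λ₀^{−r} is an eigenvalue of the matrix Π. -/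
open Matrix

/-- The `rn × rn` block pencil `Q₁(λ)`: block `(i,i)` is `λ·M_{r+1-i}`, block `(i+1,i)` is
`-N_{r+1-i}` for `i = 1,…,r-1`, block `(1,r)` is `-N_1`, all other blocks zero. -/
def pencilQ1 (r n : ℕ) (M N : Fin r → Matrix (Fin n) (Fin n) ℂ) (μ : ℂ) :
    Matrix (Fin r × Fin n) (Fin r × Fin n) ℂ :=
  Matrix.of fun p q =>
    (if p.1 = q.1 then μ * M p.1.rev p.2 q.2 else 0) +
    (if (p.1 : ℕ) = (q.1 : ℕ) + 1 ∨ ((p.1 : ℕ) = 0 ∧ (q.1 : ℕ) = r - 1) then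
      -(N q.1.rev p.2 q.2) else 0)

/-- The formal matrix product `Π = M_r N_r⁻¹ M_{r-1} N_{r-1}⁻¹ ⋯ M_1 N_1⁻¹`. -/
noncomputable def formalProd (r n : ℕ) (M N : Fin r → Matrix (Fin n) (Fin n) ℂ) :
    Matrix (Fin n) (Fin n) ℂ :=
  (List.ofFn fun i : Fin r => M i.rev * (N i.rev)⁻¹).prod

/-!
Write a vector in the kernel of `Q₁(μ)` blockwise as `(x_q)` and put `y_q = N_{q.rev} x_q`.
The block rows of `Q₁(μ) x = 0` then say `y_q = μ A_{q+1} y_{q+1}` for all `q`, cyclically,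
where `A_i = M_{i.rev} N_{i.rev}⁻¹` are the factors of `Π = A_0 ⋯ A_{r-1}`. Such a cyclic
chain is determined by its last entry `w`, which must satisfy `w = μ ^ r Π w`, and every such
`w` extends to a chain; so `Q₁(μ)` is singular iff `μ⁻ʳ` is an eigenvalue of `Π`. At `μ = 0`
the recurrence forces `y = 0`, so `Q₁(0)` is nonsingular.
-/

theorem List.prod_ofFn_smul {M N : Type*} [Monoid M] [MulOneClass N] [MulAction M N]
    [IsScalarTower M N N] [SMulCommClass M N N] {k : ℕ} (c : M) (f : Fin k → N) :
    (List.ofFn fun i => c • f i).prod = c ^ k • (List.ofFn f).prod := by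
  simpa [List.map_ofFn, Function.comp_def] using (List.smul_prod (List.ofFn f) c).symm

section CyclicChain

variable {R ι : Type*} [Semiring R] [Fintype ι] {m : ℕ}

def IsCyclicChain (B : Fin (m + 1) → Matrix ι ι R) (y : Fin (m + 1) → ι → R) : Prop :=
  ∀ q, y q = B (q + 1) *ᵥ y (q + 1)

variable [DecidableEq ι]

def tailProd (B : Fin (m + 1) → Matrix ι ι R) (q : Fin (m + 1)) : Matrix ι ι R :=
  ((List.ofFn B).drop (q + 1)).prod

variable {B : Fin (m + 1) → Matrix ι ι R}

theorem tailProd_last : tailProd B (Fin.last m) = 1 := by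
  rw [tailProd, Fin.val_last, List.drop_eq_nil_of_le (by simp), List.prod_nil]

theorem tailProd_castSucc (i : Fin m) : tailProd B i.castSucc = B i.succ * tailProd B i.succ := by
  rw [tailProd, Fin.val_castSucc, List.drop_eq_getElem_cons (by simp), List.prod_cons,
    List.getElem_ofFn]
  rfl

theorem mul_tailProd_zero : B 0 * tailProd B 0 = (List.ofFn B).prod := by
  rw [tailProd, List.ofFn_succ, Fin.val_zero, List.drop_one, List.tail_cons, List.prod_cons]

theorem IsCyclicChain.eq_tailProd_mulVec {y : Fin (m + 1) → ι → R}
    (hy : IsCyclicChain B y) (q : Fin (m + 1)) : y q = tailProd B q *ᵥ y (Fin.last m) := by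
  induction q using Fin.reverseInduction with
  | last => rw [tailProd_last, one_mulVec]
  | cast i ih => rw [hy, Fin.coeSucc_eq_succ, ih, mulVec_mulVec, tailProd_castSucc]

theorem IsCyclicChain.last_eq_prod_mulVec {y : Fin (m + 1) → ι → R} (hy : IsCyclicChain B y) :
    y (Fin.last m) = (List.ofFn B).prod *ᵥ y (Fin.last m) := by
  refine (hy _).trans ?_
  rw [Fin.last_add_one, hy.eq_tailProd_mulVec 0, mulVec_mulVec, mul_tailProd_zero]

theorem isCyclicChain_tailProd_mulVec {w : ι → R} (hw : (List.ofFn B).prod *ᵥ w = w) :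
    IsCyclicChain B fun q => tailProd B q *ᵥ w := by
  intro q
  dsimp only
  induction q using Fin.lastCases with
  | last => rw [Fin.last_add_one, mulVec_mulVec, mul_tailProd_zero, hw, tailProd_last, one_mulVec]
  | cast i => rw [Fin.coeSucc_eq_succ, mulVec_mulVec, tailProd_castSucc]

theorem exists_isCyclicChain_ne_zero_iff :
    (∃ y ≠ 0, IsCyclicChain B y) ↔ ∃ w ≠ 0, (List.ofFn B).prod *ᵥ w = w := by
  constructor
  · rintro ⟨y, hy0, hy⟩
    refine ⟨y (Fin.last m), fun h => hy0 ?_, hy.last_eq_prod_mulVec.symm⟩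
    funext q
    rw [hy.eq_tailProd_mulVec q, h, mulVec_zero, Pi.zero_apply]
  · rintro ⟨w, hw0, hw⟩
    refine ⟨_, fun h => hw0 ?_, isCyclicChain_tailProd_mulVec hw⟩
    simpa [tailProd_last] using congrFun h (Fin.last m)

end CyclicChain

section Pencil

variable {m n : ℕ} {M N : Fin (m + 1) → Matrix (Fin n) (Fin n) ℂ}

theorem pencilQ1_mulVec_apply (μ : ℂ) (x : Fin (m + 1) × Fin n → ℂ) (p : Fin (m + 1))
    (k : Fin n) :
    (pencilQ1 (m + 1) n M N μ *ᵥ x) (p, k) =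
      (μ • (M p.rev *ᵥ Function.curry x p) - N (p - 1).rev *ᵥ Function.curry x (p - 1)) k := by
  have hsubdiag : ∀ q : Fin (m + 1),
      ((p : ℕ) = q + 1 ∨ ((p : ℕ) = 0 ∧ (q : ℕ) = m + 1 - 1)) ↔ q = p - 1 := by
    intro q
    rw [eq_sub_iff_add_eq, Fin.ext_iff, Fin.val_add_one]
    split_ifs with h
    · have : (q : ℕ) = m := by rw [h]; simp
      omega
    · have : (q : ℕ) ≠ m := fun hq => h (Fin.ext (by simpa using hq))
      omega
  simp only [mulVec, dotProduct, pencilQ1, of_apply, Fintype.sum_prod_type_right, add_mul,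
    ite_mul, zero_mul, neg_mul, Finset.sum_add_distrib, hsubdiag]
  rw [Finset.sum_comm]
  simp [Finset.sum_ite_eq', mulVec, dotProduct, Finset.mul_sum, sub_eq_add_neg, mul_assoc,
    Function.curry]

theorem pencilQ1_mulVec_eq_zero_iff (hN : ∀ i, IsUnit (N i).det) (μ : ℂ)
    (x : Fin (m + 1) × Fin n → ℂ) :
    pencilQ1 (m + 1) n M N μ *ᵥ x = 0 ↔
      IsCyclicChain (fun i => μ • (M i.rev * (N i.rev)⁻¹))
        fun q => N q.rev *ᵥ Function.curry x q := by
  have hcancel : ∀ q : Fin (m + 1),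
      (μ • (M q.rev * (N q.rev)⁻¹)) *ᵥ N q.rev *ᵥ Function.curry x q =
        μ • (M q.rev *ᵥ Function.curry x q) := fun q => by
    rw [mulVec_mulVec, smul_mul_assoc, mul_assoc, nonsing_inv_mul _ (hN _), mul_one, smul_mulVec]
  have hrows : pencilQ1 (m + 1) n M N μ *ᵥ x = 0 ↔
      ∀ p, μ • (M p.rev *ᵥ Function.curry x p) - N (p - 1).rev *ᵥ Function.curry x (p - 1) = 0 := by
    simp only [funext_iff, Prod.forall, pencilQ1_mulVec_apply, Pi.zero_apply]
  rw [hrows, ← (Equiv.addRight (1 : Fin (m + 1))).forall_congr_right]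
  simp only [IsCyclicChain, hcancel, Equiv.coe_addRight, add_sub_cancel_right, sub_eq_zero]
  exact forall_congr' fun q => eq_comm

theorem pencilQ1_det_eq_zero_iff_exists_isCyclicChain (hN : ∀ i, IsUnit (N i).det) (μ : ℂ) :
    (pencilQ1 (m + 1) n M N μ).det = 0 ↔
      ∃ y ≠ 0, IsCyclicChain (fun i => μ • (M i.rev * (N i.rev)⁻¹)) y := by
  rw [← exists_mulVec_eq_zero_iff]
  constructor
  · rintro ⟨x, hx0, hx⟩
    refine ⟨_, fun hy0 => hx0 ?_, (pencilQ1_mulVec_eq_zero_iff hN μ x).1 hx⟩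
    funext ⟨q, k⟩
    have hNq := mulVec_injective_iff_isUnit.2 ((isUnit_iff_isUnit_det _).2 (hN q.rev))
    exact congrFun (hNq ((congrFun hy0 q).trans (mulVec_zero _).symm)) k
  · rintro ⟨y, hy0, hy⟩
    set x : Fin (m + 1) × Fin n → ℂ := Function.uncurry fun q => (N q.rev)⁻¹ *ᵥ y q
    have hxy : (fun q => N q.rev *ᵥ Function.curry x q) = y := by
      funext q
      simp [x, mulVec_mulVec, mul_nonsing_inv _ (hN _)]
    refine ⟨x, fun hx0 => hy0 ?_, (pencilQ1_mulVec_eq_zero_iff hN μ x).2 (hxy ▸ hy)⟩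
    rw [← hxy, hx0]
    funext q
    exact mulVec_zero _

end Pencil

/-- If all the `N_i` are invertible then `det Q₁(0) ≠ 0` (in particular `Q₁` is a regular
pencil), and for every nonzero `λ₀`, `det Q₁(λ₀) = 0` iff `λ₀^{-r}` is an eigenvalue of
the formal product `Π = M_r N_r⁻¹ ⋯ M_1 N_1⁻¹`. -/
theorem pencilQ1_det_eq_zero_iff (r n : ℕ) (hr : 1 ≤ r)
    (M N : Fin r → Matrix (Fin n) (Fin n) ℂ) (hN : ∀ i, IsUnit (N i).det) :
    (pencilQ1 r n M N 0).det ≠ 0 ∧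
    (∃ μ : ℂ, (pencilQ1 r n M N μ).det ≠ 0) ∧
    (∀ μ : ℂ, μ ≠ 0 →
      ((pencilQ1 r n M N μ).det = 0 ↔
        (formalProd r n M N - (μ ^ r)⁻¹ • (1 : Matrix (Fin n) (Fin n) ℂ)).det = 0)) := by
  obtain ⟨m, rfl⟩ : ∃ m, r = m + 1 := ⟨r - 1, by omega⟩
  have hdet0 : (pencilQ1 (m + 1) n M N 0).det ≠ 0 := by
    rw [Ne, pencilQ1_det_eq_zero_iff_exists_isCyclicChain hN]
    rintro ⟨y, hy0, hy⟩
    exact hy0 (funext fun q => by simpa using hy q)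
  refine ⟨hdet0, ⟨0, hdet0⟩, fun μ hμ => ?_⟩
  rw [pencilQ1_det_eq_zero_iff_exists_isCyclicChain hN, exists_isCyclicChain_ne_zero_iff,
    List.prod_ofFn_smul, ← exists_mulVec_eq_zero_iff]
  refine exists_congr fun w => and_congr_right fun _ => ?_
  rw [sub_mulVec, smul_mulVec, smul_mulVec, one_mulVec, sub_eq_zero,
    eq_inv_smul_iff₀ (pow_ne_zero _ hμ)]
  rfl
end

section
/- Let r ≥ 1 and let M_1,…,M_r, N_1,…,N_r ∈ ℂ^{n×n} (no invertibility assumed). Define the rn×rn pencils Q₁(λ) and Q₂(λ), with r×r block structure of n×n blocks, by: for Q₁, the (i,i) block is λ·M_{r+1−i} for i = 1,…,r, the (i+1,i) block is −N_{r+1−i} for i = 1,…,r−1, the (1,r) block is −N_1, all other blocks zero; for Q₂, the (i,i) block is λ·N_{r+1−i} for i = 1,…,r, the (i,i+1) block is −M_{r−i} for i = 1,…,r−1, the (r,1) block is −M_r, all other blocks zero. Then there exists ε ∈ {1,−1} such that det Q₂(λ) = ε·λ^{rn}·det Q₁(1/λ) for all nonzero λ ∈ ℂ; in particular, for every nonzero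 λ₀ ∈ ℂ, det Q₂(λ₀) = 0 if and only if det Q₁(1/λ₀) = 0. -/
/-!
Reading block row `i + 1 (mod r)` of `Q₁(1/λ)` as block row `i` moves its wrapped block
subdiagonal onto the diagonal and its diagonal onto the wrapped block superdiagonal, which is the
pattern of `Q₂(λ)`: entrywise, `Q₂(λ)` is `-λ` times `Q₁(1/λ)` with its rows rotated by `σ`. Hence
`det Q₂(λ) = (-λ)^(rn) · sgn σ · det Q₁(1/λ)`.
-/

open Matrix

/-- The `rn × rn` block pencil `Q₂(λ)`: block `(i,i)` is `λ·N_{r+1-i}`, block `(i,i+1)` is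
`-M_{r-i}` for `i = 1,…,r-1`, block `(r,1)` is `-M_r`, all other blocks zero. -/
def pencilQ2 (r n : ℕ) (M N : Fin r → Matrix (Fin n) (Fin n) ℂ) (μ : ℂ) :
    Matrix (Fin r × Fin n) (Fin r × Fin n) ℂ :=
  Matrix.of fun p q =>
    (if p.1 = q.1 then μ * N p.1.rev p.2 q.2 else 0) +
    (if (q.1 : ℕ) = (p.1 : ℕ) + 1 ∨ ((p.1 : ℕ) = r - 1 ∧ (q.1 : ℕ) = 0) then
      -(M q.1.rev p.2 q.2) else 0)

theorem finRotate_eq_iff {r : ℕ} (i j : Fin r) :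
    finRotate r i = j ↔ (j : ℕ) = i + 1 ∨ ((i : ℕ) = r - 1 ∧ (j : ℕ) = 0) := by
  cases r with
  | zero => exact i.elim0
  | succ k =>
    rw [Fin.ext_iff, coe_finRotate]
    split_ifs with h
    · subst h; simp only [Fin.val_last]; omega
    · have := Fin.val_lt_last h; omega

theorem pencilQ2_eq_smul_submatrix_pencilQ1 (r n : ℕ) (M N : Fin r → Matrix (Fin n) (Fin n) ℂ)
    {μ : ℂ} (hμ : μ ≠ 0) :
    pencilQ2 r n M N μ =
      (-μ) • (pencilQ1 r n M N μ⁻¹).submatrix ((finRotate r).prodCongr (Equiv.refl _)) id := by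
  ext ⟨i, k⟩ ⟨j, l⟩
  have hsuper := (finRotate_eq_iff i j).symm
  have hsub : ((finRotate r i : ℕ) = j + 1 ∨ ((finRotate r i : ℕ) = 0 ∧ (j : ℕ) = r - 1)) ↔
      i = j := by
    rw [eq_comm (a := i), ← (finRotate r).apply_eq_iff_eq, finRotate_eq_iff]
    tauto
  simp only [pencilQ1, pencilQ2, Matrix.smul_apply, submatrix_apply, of_apply, smul_eq_mul,
    Equiv.prodCongr_apply, Equiv.refl_apply, Prod.map, id_eq, hsuper, hsub]
  split_ifs with hij hrot <;> (try rw [hrot]) <;> subst_vars <;> field_simp <;> ring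

theorem det_pencilQ2_eq (r n : ℕ) (M N : Fin r → Matrix (Fin n) (Fin n) ℂ) {μ : ℂ} (hμ : μ ≠ 0) :
    (pencilQ2 r n M N μ).det =
      ((-1) ^ (r * n) * Equiv.Perm.sign ((finRotate r).prodCongr (Equiv.refl (Fin n))) : ℂ) *
        μ ^ (r * n) * (pencilQ1 r n M N μ⁻¹).det := by
  rw [pencilQ2_eq_smul_submatrix_pencilQ1 r n M N hμ, det_smul, det_permute, Fintype.card_prod,
    Fintype.card_fin, Fintype.card_fin, neg_pow]
  ring

theorem pencilQ2_det_eq_rev_pencilQ1_general (r n : ℕ)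
    (M N : Fin r → Matrix (Fin n) (Fin n) ℂ) :
    (∃ ε : ℂ, (ε = 1 ∨ ε = -1) ∧
      ∀ μ : ℂ, μ ≠ 0 →
        (pencilQ2 r n M N μ).det = ε * μ ^ (r * n) * (pencilQ1 r n M N μ⁻¹).det) ∧
    (∀ μ : ℂ, μ ≠ 0 →
      ((pencilQ2 r n M N μ).det = 0 ↔ (pencilQ1 r n M N μ⁻¹).det = 0)) := by
  set ε : ℂ := (-1) ^ (r * n) * Equiv.Perm.sign ((finRotate r).prodCongr (Equiv.refl (Fin n)))
  have hε : ε = 1 ∨ ε = -1 := by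
    rcases Int.units_eq_one_or (Equiv.Perm.sign ((finRotate r).prodCongr (Equiv.refl (Fin n))))
      with h | h <;> rcases neg_one_pow_eq_or ℂ (r * n) with h' | h' <;> simp [ε, h, h']
  refine ⟨⟨ε, hε, fun μ hμ => det_pencilQ2_eq r n M N hμ⟩, fun μ hμ => ?_⟩
  have hε0 : ε ≠ 0 := by rcases hε with h | h <;> simp [h]
  rw [det_pencilQ2_eq r n M N hμ, mul_eq_zero_iff_left (mul_ne_zero hε0 (pow_ne_zero _ hμ))]

/-- There is a sign `ε ∈ {1,-1}` with `det Q₂(λ) = ε·λ^{rn}·det Q₁(1/λ)` for all `λ ≠ 0`;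
in particular, for nonzero `λ₀`, `det Q₂(λ₀) = 0` iff `det Q₁(1/λ₀) = 0`. -/
theorem pencilQ2_det_eq_rev_pencilQ1 (r n : ℕ) (hr : 1 ≤ r)
    (M N : Fin r → Matrix (Fin n) (Fin n) ℂ) :
    (∃ ε : ℂ, (ε = 1 ∨ ε = -1) ∧
      ∀ μ : ℂ, μ ≠ 0 →
        (pencilQ2 r n M N μ).det = ε * μ ^ (r * n) * (pencilQ1 r n M N μ⁻¹).det) ∧
    (∀ μ : ℂ, μ ≠ 0 →
      ((pencilQ2 r n M N μ).det = 0 ↔ (pencilQ1 r n M N μ⁻¹).det = 0)) :=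
  pencilQ2_det_eq_rev_pencilQ1_general r n M N
end

section
/- Let r ≥ 1 and let M_1,…,M_r, N_1,…,N_r ∈ ℂ^{n×n} all be upper triangular. Define the rn×rn pencil Q₁(λ), with r×r block structure of n×n blocks, by: the (i,i) block is λ·M_{r+1−i} for i = 1,…,r, the (i+1,i) block is −N_{r+1−i} for i = 1,…,r−1, the (1,r) block is −N_1, and all other blocks are zero. Then there exists ε ∈ {1,−1} such that det Q₁(λ) = ε·det(λ^r·M_1 M_2 ⋯ M_r − N_1 N_2 ⋯ N_r) for all λ ∈ ℂ. -/
open Matrix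

/-!
Every block of `Q₁(λ)` is upper triangular, so `Q₁(λ)` is block triangular once rows and
columns are grouped by the position `k` inside the blocks. The diagonal block at `k` is the
cyclic bidiagonal `r × r` matrix with entries `λ M_i(k,k)` on the diagonal and `-N_i(k,k)`
on the cyclic subdiagonal; its determinant is `λ^r ∏ M_i(k,k) - ∏ N_i(k,k)`, which is also
the `k`-th diagonal entry of the upper triangular matrix `λ^r M_1⋯M_r - N_1⋯N_r`. Hence `ε = 1`.
-/

namespace Matrix

variable {R m : Type*}

section UpperTriangular

variable [Fintype m] [LinearOrder m]

theorem IsUpperTriangular.diag_mul [NonUnitalNonAssocSemiring R] {A B : Matrix m m R}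
    (hA : A.IsUpperTriangular) (hB : B.IsUpperTriangular) :
    (A * B).diag = A.diag * B.diag := by
  ext i
  refine (Fintype.sum_eq_single i fun j hj => ?_).trans rfl
  rcases hj.lt_or_gt with h | h
  · exact mul_eq_zero_of_left (hA h) _
  · exact mul_eq_zero_of_right _ (hB h)

theorem IsUpperTriangular.list_prod [Semiring R] {L : List (Matrix m m R)}
    (hL : ∀ A ∈ L, A.IsUpperTriangular) : L.prod.IsUpperTriangular :=
  mem_blockTriangularSubsemiring.mp <| Subsemiring.list_prod_mem _ hL

theorem IsUpperTriangular.diag_list_prod [Semiring R] {L : List (Matrix m m R)}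
    (hL : ∀ A ∈ L, A.IsUpperTriangular) : L.prod.diag = (L.map diag).prod := by
  induction L with
  | nil => ext i; simp
  | cons A L ih =>
    rw [List.forall_mem_cons] at hL
    rw [List.prod_cons, hL.1.diag_mul (list_prod hL.2), ih hL.2, List.map_cons, List.prod_cons]

theorem IsUpperTriangular.prod_ofFn [Semiring R] {r : ℕ} {A : Fin r → Matrix m m R}
    (hA : ∀ i, (A i).IsUpperTriangular) : (List.ofFn A).prod.IsUpperTriangular :=
  list_prod (List.forall_mem_ofFn_iff.mpr hA)

theorem IsUpperTriangular.prod_ofFn_apply_self [CommSemiring R] {r : ℕ}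
    {A : Fin r → Matrix m m R} (hA : ∀ i, (A i).IsUpperTriangular) (k : m) :
    (List.ofFn A).prod k k = ∏ i, A i k k := by
  rw [← diag_apply (List.ofFn A).prod, diag_list_prod (List.forall_mem_ofFn_iff.mpr hA),
    List.map_ofFn, List.prod_ofFn, Finset.prod_apply]
  rfl

theorem det_smul_prod_ofFn_sub_prod_ofFn [CommRing R] {r : ℕ} {A B : Fin r → Matrix m m R}
    (hA : ∀ i, (A i).IsUpperTriangular) (hB : ∀ i, (B i).IsUpperTriangular) (c : R) :
    (c • (List.ofFn A).prod - (List.ofFn B).prod).det =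
      ∏ k, (c * ∏ i, A i k k - ∏ i, B i k k) := by
  have hAB : (c • (List.ofFn A).prod - (List.ofFn B).prod).IsUpperTriangular := fun i j h => by
    simp [IsUpperTriangular.prod_ofFn hA h, IsUpperTriangular.prod_ofFn hB h]
  simp [det_of_isUpperTriangular hAB, IsUpperTriangular.prod_ofFn_apply_self hA,
    IsUpperTriangular.prod_ofFn_apply_self hB]

end UpperTriangular

theorem BlockTriangular.det_snd {ι α : Type*} [Fintype ι] [DecidableEq ι] [Fintype α]
    [LinearOrder α] [CommRing R] {B : Matrix (ι × α) (ι × α) R}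
    (hB : B.BlockTriangular Prod.snd) :
    B.det = ∏ k, (of fun i j => B (i, k) (j, k)).det := by
  rw [hB.det_fintype]
  refine Finset.prod_congr rfl fun k _ => ?_
  let e : ι ≃ {p : ι × α // p.2 = k} :=
    { toFun := fun i => ⟨(i, k), rfl⟩
      invFun := fun p => p.1.1
      left_inv := fun _ => rfl
      right_inv := fun ⟨(i, l), h⟩ => by subst h; rfl }
  rw [← det_submatrix_equiv_self e]
  rfl

def cyclicBidiagonal [AddGroup R] {r : ℕ} (a b : Fin r → R) : Matrix (Fin r) (Fin r) R :=
  of fun i j => (if i = j then a i else 0) +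
    (if (i : ℕ) = (j : ℕ) + 1 ∨ ((i : ℕ) = 0 ∧ (j : ℕ) = r - 1) then -b j else 0)

theorem cyclicBidiagonal_apply [AddGroup R] {r : ℕ} (a b : Fin r → R) (i j : Fin r) :
    cyclicBidiagonal a b i j = (if i = j then a i else 0) +
      (if (i : ℕ) = (j : ℕ) + 1 ∨ ((i : ℕ) = 0 ∧ (j : ℕ) = r - 1) then -b j else 0) :=
  rfl

theorem det_cyclicBidiagonal_submatrix_succ_succ [CommRing R] {s : ℕ} (a b : Fin (s + 2) → R) :
    ((cyclicBidiagonal a b).submatrix Fin.succ Fin.succ).det = ∏ i : Fin (s + 1), a i.succ := by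
  rw [det_of_isLowerTriangular]
  · simp [cyclicBidiagonal_apply]
  · intro i j (h : i < j)
    have : (i : ℕ) < j := h
    simp only [submatrix_apply, cyclicBidiagonal_apply, Fin.succ_inj, Fin.val_succ]
    rw [if_neg h.ne, if_neg (by omega), add_zero]

theorem det_cyclicBidiagonal_submatrix_succ_castSucc [CommRing R] {s : ℕ}
    (a b : Fin (s + 2) → R) :
    ((cyclicBidiagonal a b).submatrix Fin.succ Fin.castSucc).det =
      ∏ i : Fin (s + 1), -b i.castSucc := by
  rw [det_of_isUpperTriangular]
  · simp [cyclicBidiagonal_apply, Fin.castSucc_lt_succ.ne']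
  · intro i j (h : j < i)
    have : (j : ℕ) < i := h
    simp only [submatrix_apply, cyclicBidiagonal_apply, Fin.val_succ, Fin.val_castSucc]
    rw [if_neg (fun h' => by simp only [Fin.ext_iff, Fin.val_succ, Fin.val_castSucc] at h'; omega),
      if_neg (by omega), add_zero]

/-- Laplace expansion along the first row, whose only nonzero entries are `a 0` and the corner
`-b (last)`; the two complementary minors are triangular. -/
theorem det_cyclicBidiagonal [CommRing R] {s : ℕ} (a b : Fin (s + 1) → R) :
    (cyclicBidiagonal a b).det = ∏ i, a i - ∏ i, b i := by
  cases s with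
  | zero => simp [cyclicBidiagonal_apply, sub_eq_add_neg]
  | succ s =>
    rw [det_succ_row_zero, Fintype.sum_eq_add 0 (Fin.last _) (by simp [Fin.ext_iff])]
    · rw [Fin.succAbove_zero, Fin.succAbove_last, det_cyclicBidiagonal_submatrix_succ_succ,
        det_cyclicBidiagonal_submatrix_succ_castSucc, Finset.prod_neg]
      have h00 : cyclicBidiagonal a b 0 0 = a 0 := by simp [cyclicBidiagonal_apply]
      have h0last : cyclicBidiagonal a b 0 (Fin.last _) = -b (Fin.last _) := by
        simp [cyclicBidiagonal_apply]
      rw [h00, h0last, Fin.val_zero, Fin.val_last, Finset.card_fin, Fin.prod_univ_succ a,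
        Fin.prod_univ_castSucc b]
      have hsign : (-1 : R) ^ (s + 1) * (-1) ^ (s + 1) = 1 := by
        rw [← mul_pow, neg_one_mul, neg_neg, one_pow]
      linear_combination (-(∏ i : Fin (s + 1), b i.castSucc) * b (Fin.last _)) * hsign
    · rintro j ⟨h0, hl⟩
      rw [cyclicBidiagonal_apply, if_neg (Ne.symm h0),
        if_neg (fun h => hl (Fin.ext (by simpa using h))), add_zero, mul_zero, zero_mul]

end Matrix

section Pencil

variable {n : ℕ}

theorem pencilQ1_blockTriangular_snd {r : ℕ} {M N : Fin r → Matrix (Fin n) (Fin n) ℂ}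
    (hM : ∀ i, (M i).IsUpperTriangular) (hN : ∀ i, (N i).IsUpperTriangular) (μ : ℂ) :
    (pencilQ1 r n M N μ).BlockTriangular Prod.snd := by
  intro p q h
  simp [pencilQ1, hM _ h, hN _ h]

theorem pencilQ1_diagonalBlock {r : ℕ} (M N : Fin r → Matrix (Fin n) (Fin n) ℂ) (μ : ℂ)
    (k : Fin n) :
    (of fun i j => pencilQ1 r n M N μ (i, k) (j, k)) =
      cyclicBidiagonal (fun i => μ * M i.rev k k) (fun i => N i.rev k k) :=
  rfl

theorem det_pencilQ1 {s : ℕ} {M N : Fin (s + 1) → Matrix (Fin n) (Fin n) ℂ}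
    (hM : ∀ i, (M i).IsUpperTriangular) (hN : ∀ i, (N i).IsUpperTriangular) (μ : ℂ) :
    (pencilQ1 (s + 1) n M N μ).det = ∏ k, (μ ^ (s + 1) * ∏ i, M i k k - ∏ i, N i k k) := by
  rw [(pencilQ1_blockTriangular_snd hM hN μ).det_snd]
  refine Finset.prod_congr rfl fun k _ => ?_
  have prod_rev (f : Fin (s + 1) → ℂ) : ∏ i, f (Fin.rev i) = ∏ i, f i :=
    Equiv.prod_comp Fin.revPerm f
  rw [pencilQ1_diagonalBlock, det_cyclicBidiagonal, Finset.prod_mul_distrib, Finset.prod_const,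
    Finset.card_fin, prod_rev fun i => M i k k, prod_rev fun i => N i k k]

end Pencil

/-- If all `M_i`, `N_i` are upper triangular, then there is a sign `ε ∈ {1,-1}` such that
`det Q₁(λ) = ε·det(λ^r·M_1⋯M_r − N_1⋯N_r)` for all `λ`. -/
theorem pencilQ1_det_triangular (r n : ℕ) (hr : 1 ≤ r)
    (M N : Fin r → Matrix (Fin n) (Fin n) ℂ)
    (hM : ∀ k : Fin r, ∀ i j : Fin n, (j : ℕ) < (i : ℕ) → M k i j = 0)
    (hN : ∀ k : Fin r, ∀ i j : Fin n, (j : ℕ) < (i : ℕ) → N k i j = 0) :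
    ∃ ε : ℂ, (ε = 1 ∨ ε = -1) ∧
      ∀ μ : ℂ, (pencilQ1 r n M N μ).det =
        ε * (μ ^ r • (List.ofFn fun i : Fin r => M i).prod
              - (List.ofFn fun i : Fin r => N i).prod).det := by
  obtain ⟨s, rfl⟩ : ∃ s, r = s + 1 := ⟨r - 1, by omega⟩
  have hM' : ∀ k, (M k).IsUpperTriangular := fun k i j h => hM k i j h
  have hN' : ∀ k, (N k).IsUpperTriangular := fun k i j h => hN k i j h
  refine ⟨1, Or.inl rfl, fun μ => ?_⟩
  rw [one_mul, det_pencilQ1 hM' hN', det_smul_prod_ofFn_sub_prod_ofFn hM' hN']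
end

section
/- Let r be an odd positive integer and let A_i, C_i ∈ ℂ^{m×m}, B_i, D_i ∈ ℂ^{n×n} for i = 1,…,r. Then a tuple (X_1,…,X_r) ∈ (ℂ^{m×n})^r satisfies A_i X_i B_i + C_i X_{i+1} D_i = 0 for i = 1,…,r−1 and A_r X_r B_r + C_r conj(X_1) D_r = 0 if and only if the tuple (𝔦·(−1)^{i+1} X_i)_{i=1,…,r} (where 𝔦 is the imaginary unit) satisfies A_i X_i B_i − C_i X_{i+1} D_i = 0 for i = 1,…,r−1 and A_r X_r B_r − C_r conj(X_1) D_r = 0. In particular, the map (X_1,…,X_r) ↦ 𝔦·(X_1, −X_2, …, −X_{r−1}, X_r) is an ℝ-linear bijection between the two solution sets, so the two solution spaces have the same dimension as real vector spaces. -/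
open Matrix

lemma key_smul_iff {m n : ℕ} (c : ℂ) (hc : c ≠ 0)
    (A C : Matrix (Fin m) (Fin m) ℂ) (B D : Matrix (Fin n) (Fin n) ℂ)
    (X Y : Matrix (Fin m) (Fin n) ℂ) :
    A * (c • X) * B - C * ((-c) • Y) * D = 0 ↔ A * X * B + C * Y * D = 0 := by
  rw [Matrix.mul_smul, Matrix.smul_mul, Matrix.mul_smul, Matrix.smul_mul, neg_smul,
    sub_neg_eq_add, ← smul_add, smul_eq_zero]
  simp [hc]

/-- For `r` odd, `(X_1,…,X_r)` solves the periodic system with `+` signs (whose last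
equation involves `conj(X_1)`) iff `𝔦·(X_1, -X_2, …, -X_{r-1}, X_r)` (i.e.
`(𝔦·(-1)^{i+1} X_i)_i`, 0-based `(𝔦·(-1)^i X_i)_i`) solves the system with `-` signs;
in particular this map is a bijection between the two solution sets (it is clearly
`ℝ`-linear, so the solution spaces have the same real dimension). -/
theorem plus_system_iff_minus_system_odd (r m n : ℕ) (hr : 0 < r) (hrodd : Odd r)
    (A C : Fin r → Matrix (Fin m) (Fin m) ℂ)
    (B D : Fin r → Matrix (Fin n) (Fin n) ℂ) :
    (∀ X : Fin r → Matrix (Fin m) (Fin n) ℂ,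
      (((∀ i : Fin r, ∀ h : (i : ℕ) + 1 < r,
            A i * X i * B i + C i * X ⟨(i : ℕ) + 1, h⟩ * D i = 0) ∧
          A ⟨r - 1, by omega⟩ * X ⟨r - 1, by omega⟩ * B ⟨r - 1, by omega⟩
            + C ⟨r - 1, by omega⟩ * (X ⟨0, hr⟩).map (starRingEnd ℂ) * D ⟨r - 1, by omega⟩
            = 0) ↔
        ((∀ i : Fin r, ∀ h : (i : ℕ) + 1 < r,
            A i * ((Complex.I * (-1 : ℂ) ^ (i : ℕ)) • X i) * B i
              - C i * ((Complex.I * (-1 : ℂ) ^ ((i : ℕ) + 1)) • X ⟨(i : ℕ) + 1, h⟩) * D i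
              = 0) ∧
          A ⟨r - 1, by omega⟩
              * ((Complex.I * (-1 : ℂ) ^ (r - 1)) • X ⟨r - 1, by omega⟩)
              * B ⟨r - 1, by omega⟩
            - C ⟨r - 1, by omega⟩
              * (((Complex.I * (-1 : ℂ) ^ (0 : ℕ)) • X ⟨0, hr⟩).map (starRingEnd ℂ))
              * D ⟨r - 1, by omega⟩
            = 0))) ∧
    Set.BijOn (fun (X : Fin r → Matrix (Fin m) (Fin n) ℂ) =>
        fun i : Fin r => (Complex.I * (-1 : ℂ) ^ (i : ℕ)) • X i)
      {X | (∀ i : Fin r, ∀ h : (i : ℕ) + 1 < r,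
              A i * X i * B i + C i * X ⟨(i : ℕ) + 1, h⟩ * D i = 0) ∧
            A ⟨r - 1, by omega⟩ * X ⟨r - 1, by omega⟩ * B ⟨r - 1, by omega⟩
              + C ⟨r - 1, by omega⟩ * (X ⟨0, hr⟩).map (starRingEnd ℂ)
                * D ⟨r - 1, by omega⟩ = 0}
      {X | (∀ i : Fin r, ∀ h : (i : ℕ) + 1 < r,
              A i * X i * B i - C i * X ⟨(i : ℕ) + 1, h⟩ * D i = 0) ∧
            A ⟨r - 1, by omega⟩ * X ⟨r - 1, by omega⟩ * B ⟨r - 1, by omega⟩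
              - C ⟨r - 1, by omega⟩ * (X ⟨0, hr⟩).map (starRingEnd ℂ)
                * D ⟨r - 1, by omega⟩ = 0} := by
  have hpow : ((-1 : ℂ)) ^ (r - 1) = 1 := by
    obtain ⟨k, hk⟩ := hrodd
    subst hk
    rw [Nat.add_sub_cancel, pow_mul]
    norm_num
  have hne : ∀ i : ℕ, (Complex.I * (-1 : ℂ) ^ i) ≠ 0 := fun i => by
    simp [Complex.I_ne_zero, pow_ne_zero]
  have hconj : ∀ X : Matrix (Fin m) (Fin n) ℂ,
      ((Complex.I * (-1 : ℂ) ^ (0 : ℕ)) • X).map (starRingEnd ℂ)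
        = (-(Complex.I * (-1 : ℂ) ^ (r - 1))) • X.map (starRingEnd ℂ) := by
    intro X
    ext i j
    simp [Matrix.map_apply, hpow, Complex.conj_I]
  have hiff : ∀ X : Fin r → Matrix (Fin m) (Fin n) ℂ,
      ((∀ i : Fin r, ∀ h : (i : ℕ) + 1 < r,
            A i * X i * B i + C i * X ⟨(i : ℕ) + 1, h⟩ * D i = 0) ∧
          A ⟨r - 1, by omega⟩ * X ⟨r - 1, by omega⟩ * B ⟨r - 1, by omega⟩
            + C ⟨r - 1, by omega⟩ * (X ⟨0, hr⟩).map (starRingEnd ℂ) * D ⟨r - 1, by omega⟩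
            = 0) ↔
        ((∀ i : Fin r, ∀ h : (i : ℕ) + 1 < r,
            A i * ((Complex.I * (-1 : ℂ) ^ (i : ℕ)) • X i) * B i
              - C i * ((Complex.I * (-1 : ℂ) ^ ((i : ℕ) + 1)) • X ⟨(i : ℕ) + 1, h⟩) * D i
              = 0) ∧
          A ⟨r - 1, by omega⟩
              * ((Complex.I * (-1 : ℂ) ^ (r - 1)) • X ⟨r - 1, by omega⟩)
              * B ⟨r - 1, by omega⟩
            - C ⟨r - 1, by omega⟩
              * (((Complex.I * (-1 : ℂ) ^ (0 : ℕ)) • X ⟨0, hr⟩).map (starRingEnd ℂ))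
              * D ⟨r - 1, by omega⟩
            = 0) := by
    intro X
    apply and_congr
    · refine forall_congr' fun i => forall_congr' fun h => ?_
      rw [show (Complex.I * (-1 : ℂ) ^ ((i : ℕ) + 1))
            = -(Complex.I * (-1 : ℂ) ^ (i : ℕ)) by rw [pow_succ]; ring]
      exact (key_smul_iff _ (hne i) _ _ _ _ _ _).symm
    · rw [hconj]
      exact (key_smul_iff _ (hne (r - 1)) _ _ _ _ _ _).symm
  refine ⟨hiff, ?_, ?_, ?_⟩
  · intro X hX
    exact (hiff X).mp hX
  · intro X _ Y _ hXY
    funext i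
    have := congrFun hXY i
    exact smul_right_injective (Matrix (Fin m) (Fin n) ℂ) (hne (i : ℕ)) this
  · intro Y hY
    refine ⟨fun i => (Complex.I * (-1 : ℂ) ^ (i : ℕ))⁻¹ • Y i, ?_, ?_⟩
    · have hmap : (fun i : Fin r => (Complex.I * (-1 : ℂ) ^ (i : ℕ)) •
          ((Complex.I * (-1 : ℂ) ^ (i : ℕ))⁻¹ • Y i)) = Y := by
        funext i
        rw [smul_inv_smul₀ (hne (i : ℕ))]
      have h2 : ∀ (i : ℕ) (M : Matrix (Fin m) (Fin n) ℂ),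
          (Complex.I * (-1 : ℂ) ^ i) • ((Complex.I * (-1 : ℂ) ^ i)⁻¹ • M) = M :=
        fun i M => smul_inv_smul₀ (hne i) M
      refine (hiff _).mpr ?_
      simp only [h2]
      exact hY
    · funext i
      simp only
      rw [smul_inv_smul₀ (hne (i : ℕ))]
end

section
/- Let A ∈ ℂ^{m×m} and D ∈ ℂ^{n×n}. The matrices conj(A)·A and conj(D)·D have no common eigenvalue if and only if the 2m×2m pencil with blocks [(1,1) block λ·I_m, (1,2) block A; (2,1) block conj(A), (2,2) block λ·I_m] and the 2n×2n pencil with blocks [(1,1) block λ·I_n, (1,2) block D; (2,1) block conj(D), (2,2) block λ·I_n] are regular and have disjoint spectra. -/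
open Matrix Polynomial

/-- Schur-complement computation for nonzero `μ`. -/
lemma det_pencil_ne_zero {k : ℕ} (B C : Matrix (Fin k) (Fin k) ℂ) {μ : ℂ} (hμ : μ ≠ 0) :
    (Matrix.fromBlocks (μ • (1 : Matrix (Fin k) (Fin k) ℂ)) B C
      (μ • (1 : Matrix (Fin k) (Fin k) ℂ))).det
      = ((μ ^ 2) • (1 : Matrix (Fin k) (Fin k) ℂ) - C * B).det := by
  haveI : Invertible (μ • (1 : Matrix (Fin k) (Fin k) ℂ)) :=
    ⟨μ⁻¹ • 1, by
      rw [Matrix.smul_mul, Matrix.mul_smul, smul_smul, inv_mul_cancel₀ hμ, one_smul, one_mul],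
      by
      rw [Matrix.smul_mul, Matrix.mul_smul, smul_smul, mul_inv_cancel₀ hμ, one_smul, one_mul]⟩
  have hinv : ⅟(μ • (1 : Matrix (Fin k) (Fin k) ℂ)) = μ⁻¹ • 1 := by
    apply invOf_eq_right_inv
    rw [Matrix.smul_mul, Matrix.mul_smul, smul_smul, mul_inv_cancel₀ hμ, one_smul, one_mul]
  have h1 : C * (μ⁻¹ • (1 : Matrix (Fin k) (Fin k) ℂ)) * B = μ⁻¹ • (C * B) := by
    rw [Matrix.mul_smul, Matrix.mul_one, Matrix.smul_mul]
  have h2 : μ • (μ • (1 : Matrix (Fin k) (Fin k) ℂ) - μ⁻¹ • (C * B))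
      = (μ ^ 2) • (1 : Matrix (Fin k) (Fin k) ℂ) - C * B := by
    rw [smul_sub, smul_smul, smul_smul, mul_inv_cancel₀ hμ, one_smul, sq]
  rw [Matrix.det_fromBlocks₁₁, hinv, h1, ← h2, Matrix.det_smul, Matrix.det_smul]
  simp

/-- The pencil determinant identity for all `μ`, via a polynomial argument. -/
lemma det_pencil {k : ℕ} (B C : Matrix (Fin k) (Fin k) ℂ) (μ : ℂ) :
    (Matrix.fromBlocks (μ • (1 : Matrix (Fin k) (Fin k) ℂ)) B C
      (μ • (1 : Matrix (Fin k) (Fin k) ℂ))).det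
      = ((μ ^ 2) • (1 : Matrix (Fin k) (Fin k) ℂ) - C * B).det := by
  -- polynomial versions
  set P : ℂ[X] := (Matrix.fromBlocks ((X : ℂ[X]) • (1 : Matrix (Fin k) (Fin k) ℂ[X]))
    (B.map Polynomial.C) (C.map Polynomial.C)
    ((X : ℂ[X]) • (1 : Matrix (Fin k) (Fin k) ℂ[X]))).det with hP
  set Q : ℂ[X] := (((X : ℂ[X]) ^ 2) • (1 : Matrix (Fin k) (Fin k) ℂ[X])
    - (C * B).map Polynomial.C).det with hQ
  have key : ∀ z : ℂ, P.eval z =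
      (Matrix.fromBlocks (z • (1 : Matrix (Fin k) (Fin k) ℂ)) B C
        (z • (1 : Matrix (Fin k) (Fin k) ℂ))).det := by
    intro z
    rw [hP, ← Polynomial.coe_evalRingHom, RingHom.map_det, RingHom.mapMatrix_apply,
      Matrix.fromBlocks_map]
    congr 1
    ext i j
    cases i <;> cases j <;>
      simp [Matrix.map_apply, Matrix.one_apply, apply_ite (Polynomial.eval z)]
  have keyQ : ∀ z : ℂ, Q.eval z =
      ((z ^ 2) • (1 : Matrix (Fin k) (Fin k) ℂ) - C * B).det := by
    intro z
    rw [hQ, ← Polynomial.coe_evalRingHom, RingHom.map_det, RingHom.mapMatrix_apply]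
    congr 1
    ext i j
    simp [Matrix.map_apply, Matrix.one_apply, Matrix.sub_apply, Matrix.mul_apply,
      Polynomial.eval_finset_sum, apply_ite (Polynomial.eval z)]
  have hPQ : P = Q := by
    refine Polynomial.eq_of_infinite_eval_eq _ _
      (((Set.finite_singleton (0 : ℂ)).infinite_compl).mono ?_)
    intro z hz
    have hz' : z ≠ 0 := by simpa using hz
    simp only [Set.mem_setOf_eq]
    rw [key z, keyQ z, det_pencil_ne_zero B C hz']
  have := congrArg (Polynomial.eval μ) hPQ
  rw [key μ, keyQ μ] at this
  exact this

/-- Evaluation of the characteristic polynomial. -/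
lemma charpoly_eval {k : ℕ} (M : Matrix (Fin k) (Fin k) ℂ) (z : ℂ) :
    M.charpoly.eval z = (z • (1 : Matrix (Fin k) (Fin k) ℂ) - M).det := by
  rw [Matrix.charpoly, ← Polynomial.coe_evalRingHom, RingHom.map_det]
  congr 1
  ext i j
  by_cases h : i = j
  · subst h
    simp [Matrix.map_apply, Matrix.charmatrix_apply_eq, Matrix.one_apply]
  · simp [Matrix.map_apply, Matrix.charmatrix_apply_ne _ _ _ h, Matrix.one_apply_ne h,
      Matrix.sub_apply]

/-- There is a point where the shifted determinant is nonzero. -/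
lemma exists_det_ne {k : ℕ} (M : Matrix (Fin k) (Fin k) ℂ) :
    ∃ z : ℂ, (z • (1 : Matrix (Fin k) (Fin k) ℂ) - M).det ≠ 0 := by
  by_contra h
  push_neg at h
  have : M.charpoly = 0 := by
    apply Polynomial.funext
    intro z
    rw [charpoly_eval, h z, Polynomial.eval_zero]
  exact M.charpoly_monic.ne_zero this

lemma det_sub_swap {k : ℕ} (M N : Matrix (Fin k) (Fin k) ℂ) :
    (M - N).det = 0 ↔ (N - M).det = 0 := by
  rw [← neg_sub N M, Matrix.det_neg]
  simp

/-- `conj(A)·A` and `conj(D)·D` have no common eigenvalue iff the pencils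
`[λI, A; conj A, λI]` and `[λI, D; conj D, λI]` are regular and have disjoint spectra. -/
theorem conjA_mul_A_disjoint_spectra_iff_pencils (m n : ℕ)
    (A : Matrix (Fin m) (Fin m) ℂ) (D : Matrix (Fin n) (Fin n) ℂ) :
    (∀ μ : ℂ,
        ¬((A.map (starRingEnd ℂ) * A - μ • (1 : Matrix (Fin m) (Fin m) ℂ)).det = 0 ∧
          (D.map (starRingEnd ℂ) * D - μ • (1 : Matrix (Fin n) (Fin n) ℂ)).det = 0))
      ↔
    ((∃ μ : ℂ, (Matrix.fromBlocks (μ • (1 : Matrix (Fin m) (Fin m) ℂ)) A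
        (A.map (starRingEnd ℂ)) (μ • (1 : Matrix (Fin m) (Fin m) ℂ))).det ≠ 0) ∧
     (∃ μ : ℂ, (Matrix.fromBlocks (μ • (1 : Matrix (Fin n) (Fin n) ℂ)) D
        (D.map (starRingEnd ℂ)) (μ • (1 : Matrix (Fin n) (Fin n) ℂ))).det ≠ 0) ∧
     (∀ μ : ℂ,
        ¬((Matrix.fromBlocks (μ • (1 : Matrix (Fin m) (Fin m) ℂ)) A
            (A.map (starRingEnd ℂ)) (μ • (1 : Matrix (Fin m) (Fin m) ℂ))).det = 0 ∧
          (Matrix.fromBlocks (μ • (1 : Matrix (Fin n) (Fin n) ℂ)) D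
            (D.map (starRingEnd ℂ)) (μ • (1 : Matrix (Fin n) (Fin n) ℂ))).det = 0)) ∧
     (IsUnit (Matrix.fromBlocks (1 : Matrix (Fin m) (Fin m) ℂ) 0 0
        (1 : Matrix (Fin m) (Fin m) ℂ)).det ∨
      IsUnit (Matrix.fromBlocks (1 : Matrix (Fin n) (Fin n) ℂ) 0 0
        (1 : Matrix (Fin n) (Fin n) ℂ)).det)) := by
  have hA : ∀ μ : ℂ, (Matrix.fromBlocks (μ • (1 : Matrix (Fin m) (Fin m) ℂ)) A
        (A.map (starRingEnd ℂ)) (μ • (1 : Matrix (Fin m) (Fin m) ℂ))).det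
      = ((μ ^ 2) • (1 : Matrix (Fin m) (Fin m) ℂ) - A.map (starRingEnd ℂ) * A).det :=
    fun μ => det_pencil A (A.map (starRingEnd ℂ)) μ
  have hD : ∀ μ : ℂ, (Matrix.fromBlocks (μ • (1 : Matrix (Fin n) (Fin n) ℂ)) D
        (D.map (starRingEnd ℂ)) (μ • (1 : Matrix (Fin n) (Fin n) ℂ))).det
      = ((μ ^ 2) • (1 : Matrix (Fin n) (Fin n) ℂ) - D.map (starRingEnd ℂ) * D).det :=
    fun μ => det_pencil D (D.map (starRingEnd ℂ)) μ
  constructor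
  · intro h
    refine ⟨?_, ?_, ?_, ?_⟩
    · obtain ⟨z, hz⟩ := exists_det_ne (A.map (starRingEnd ℂ) * A)
      obtain ⟨μ, hμ⟩ := IsAlgClosed.exists_pow_nat_eq (k := ℂ) z (n := 2) (by norm_num)
      exact ⟨μ, by rw [hA μ, hμ]; exact hz⟩
    · obtain ⟨z, hz⟩ := exists_det_ne (D.map (starRingEnd ℂ) * D)
      obtain ⟨μ, hμ⟩ := IsAlgClosed.exists_pow_nat_eq (k := ℂ) z (n := 2) (by norm_num)
      exact ⟨μ, by rw [hD μ, hμ]; exact hz⟩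
    · intro μ ⟨h1, h2⟩
      rw [hA μ] at h1
      rw [hD μ] at h2
      exact h (μ ^ 2) ⟨(det_sub_swap _ _).mpr h1, (det_sub_swap _ _).mpr h2⟩
    · left
      simp
  · rintro ⟨-, -, h, -⟩ μ ⟨h1, h2⟩
    obtain ⟨z, hz⟩ := IsAlgClosed.exists_pow_nat_eq (k := ℂ) μ (n := 2) (by norm_num)
    apply h z
    rw [hA z, hD z, hz]
    exact ⟨(det_sub_swap _ _).mpr h1, (det_sub_swap _ _).mpr h2⟩
end

section
/- Let A ∈ ℂ^{m×m} and D ∈ ℂ^{n×n}. The equation A X − conj(X) D = E has a unique solution X ∈ ℂ^{m×n} for every right-hand side E ∈ ℂ^{m×n} if and only if the matrices conj(A)·A ∈ ℂ^{m×m} and conj(D)·D ∈ ℂ^{n×n} have no common eigenvalue. -/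
/-!
The map `X ↦ A X - conj(X) D` is `ℝ`-linear on a finite-dimensional space, so unique solvability
for every right-hand side amounts to a trivial kernel.

If `A X = conj(X) D`, conjugating gives `conj(A) conj(X) = X conj(D)`, hence
`conj(A) A X = X conj(D) D`. A Sylvester equation `B X = X C` whose characteristic polynomials are
coprime only has the solution `X = 0`: `χ_C(B)` is invertible and `χ_C(B) X = X χ_C(C) = 0`.

Conversely, let `conj(A) A u = μ u` and `a conj(D) D = μ a` with `u, a ≠ 0`. For `μ ≠ 0`,
`Z = μ u a` and `W = conj(A u) conj(a) D` satisfy `A Z = conj(W) D` and `A W = conj(Z) D`, so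
`ω Z + conj(ω) W` lies in the kernel for every `ω ∈ ℂ`, and it is nonzero for `ω = 1` or `ω = i`.
For `μ = 0` both `A` and `D` are singular, and `u conj(a)` with `A u = 0`, `a D = 0` is in the kernel.
-/

open Matrix Polynomial ComplexConjugate

namespace Matrix

section Sylvester

variable {R : Type*} [CommRing R] {m n : Type*} [Fintype m] [Fintype n] [DecidableEq m]
  [DecidableEq n] {B : Matrix m m R} {C : Matrix n n R} {X : Matrix m n R}

theorem aeval_mul_eq_mul_aeval (h : B * X = X * C) (p : R[X]) :
    aeval B p * X = X * aeval C p := by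
  have hpow (k : ℕ) : B ^ k * X = X * C ^ k := by
    induction k with
    | zero => simp
    | succ k ih =>
      rw [pow_succ', pow_succ', Matrix.mul_assoc, ih, ← Matrix.mul_assoc, h, Matrix.mul_assoc]
  induction p using Polynomial.induction_on' with
  | add p q hp hq => rw [map_add, map_add, Matrix.add_mul, Matrix.mul_add, hp, hq]
  | monomial k r =>
    simp only [aeval_monomial, ← Algebra.smul_def, Matrix.smul_mul, Matrix.mul_smul, hpow]

theorem eq_zero_of_mul_eq_mul_of_isCoprime_charpoly
    (hBC : IsCoprime B.charpoly C.charpoly) (h : B * X = X * C) : X = 0 := by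
  obtain ⟨a, b, hab⟩ := hBC
  have hinv : aeval B b * aeval B C.charpoly = 1 := by
    simpa [aeval_self_charpoly] using congrArg (aeval B) hab
  calc X = (aeval B b * aeval B C.charpoly) * X := by rw [hinv, Matrix.one_mul]
    _ = aeval B b * (X * aeval C C.charpoly) := by
      rw [Matrix.mul_assoc, aeval_mul_eq_mul_aeval h]
    _ = 0 := by rw [aeval_self_charpoly, Matrix.mul_zero, Matrix.mul_zero]

end Sylvester

section Field

variable {K : Type*} [Field K] {m n : Type*} [Fintype m] [Fintype n] [DecidableEq m]
  [DecidableEq n]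

theorem isRoot_charpoly_iff_det_sub_smul_one (M : Matrix n n K) (μ : K) :
    M.charpoly.IsRoot μ ↔ (M - μ • 1).det = 0 := by
  rw [IsRoot, eval_charpoly, ← neg_sub, det_neg, smul_one_eq_diagonal, scalar_apply]
  simp

theorem isCoprime_charpoly_of_forall_not_det_eq_zero [IsAlgClosed K]
    {B : Matrix m m K} {C : Matrix n n K}
    (h : ∀ μ : K, ¬((B - μ • 1).det = 0 ∧ (C - μ • 1).det = 0)) :
    IsCoprime B.charpoly C.charpoly := by
  rw [isCoprime_iff_aeval_ne_zero_of_isAlgClosed (k := K) K]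
  intro μ
  simpa only [coe_aeval_eq_eval, ne_eq, ← IsRoot.def, isRoot_charpoly_iff_det_sub_smul_one,
    not_and_or] using h μ

end Field

theorem vecMulVec_ne_zero_of_ne_zero {α m n : Type*} [MulZeroClass α] [NoZeroDivisors α]
    {u : m → α} {v : n → α} (hu : u ≠ 0) (hv : v ≠ 0) : vecMulVec u v ≠ 0 := by
  obtain ⟨i, hi⟩ := Function.ne_iff.mp hu
  obtain ⟨j, hj⟩ := Function.ne_iff.mp hv
  exact fun h => mul_ne_zero hi hj congr($h i j)

theorem map_vecMulVec {α β F m n : Type*} [Mul α] [Mul β] [FunLike F α β] [MulHomClass F α β]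
    (f : F) (u : m → α) (v : n → α) : (vecMulVec u v).map f = vecMulVec (f ∘ u) (f ∘ v) := by
  ext
  simp [vecMulVec_apply]

section Conj

variable {R : Type*} [CommRing R] [StarRing R] {m n : Type*}

@[simp]
theorem map_conj_map_conj (M : Matrix m n R) : (M.map conj).map conj = M := by
  ext
  simp

@[simp]
theorem conj_comp_conj_comp (v : n → R) : conj ∘ (conj ∘ v) = v := by
  ext
  simp

theorem map_conj_smul (r : R) (M : Matrix m n R) : (r • M).map conj = conj r • M.map conj :=
  Matrix.map_smulₛₗ _ _ r (map_mul conj r) M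

variable [Fintype m] [Fintype n] {A : Matrix m m R} {D : Matrix n n R}

omit [Fintype m] in
theorem conj_comp_mulVec (M : Matrix m n R) (v : n → R) :
    conj ∘ (M *ᵥ v) = M.map conj *ᵥ (conj ∘ v) :=
  funext (RingHom.map_mulVec conj M v)

omit [Fintype n] in
theorem conj_comp_vecMul (M : Matrix m n R) (v : m → R) :
    conj ∘ (v ᵥ* M) = (conj ∘ v) ᵥ* M.map conj :=
  funext (RingHom.map_vecMul conj M v)

theorem map_conj_mul_self_mul_eq_mul_map_conj_mul_self {X : Matrix m n R}
    (h : A * X = X.map conj * D) : (A.map conj * A) * X = X * (D.map conj * D) := by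
  have hconj : A.map conj * X.map conj = X * D.map conj := by
    simpa only [Matrix.map_mul, map_conj_map_conj] using congrArg (·.map conj) h
  rw [Matrix.mul_assoc, h, ← Matrix.mul_assoc, hconj, Matrix.mul_assoc]

/-- `X` solves `A X = conj(X) D` iff `(X, X)` is such a pair; for a general pair every
`ω Z + conj(ω) W` is a solution. -/
def IsConjSylvesterPair (A : Matrix m m R) (D : Matrix n n R) (Z W : Matrix m n R) : Prop :=
  A * Z = W.map conj * D ∧ A * W = Z.map conj * D

theorem IsConjSylvesterPair.mul_combination {Z W : Matrix m n R}
    (h : IsConjSylvesterPair A D Z W) (ω : R) :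
    A * (ω • Z + conj ω • W) = (ω • Z + conj ω • W).map conj * D := by
  rw [Matrix.map_add _ (map_add conj), map_conj_smul, map_conj_smul, starRingEnd_self_apply,
    Matrix.mul_add, Matrix.mul_smul, Matrix.mul_smul, h.1, h.2, Matrix.add_mul, Matrix.smul_mul,
    Matrix.smul_mul, add_comm]

theorem isConjSylvesterPair_of_eigenvectors {μ : R} {u : m → R} {a : n → R}
    (hu : (A.map conj * A) *ᵥ u = μ • u) (ha : a ᵥ* (D.map conj * D) = μ • a) :
    IsConjSylvesterPair A D (μ • vecMulVec u a)
      (vecMulVec (conj ∘ (A *ᵥ u)) ((conj ∘ a) ᵥ* D)) := by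
  have hAu : A *ᵥ (conj ∘ (A *ᵥ u)) = conj μ • (conj ∘ u) := by
    rw [← map_conj_map_conj A, ← conj_comp_mulVec, mulVec_mulVec, map_conj_map_conj, hu]
    ext
    simp
  have ha' : conj ∘ ((conj ∘ a) ᵥ* D) = a ᵥ* D.map conj := by
    rw [conj_comp_vecMul, conj_comp_conj_comp]
  constructor
  · rw [Matrix.mul_smul, mul_vecMulVec, map_vecMulVec, vecMulVec_mul, ha', vecMul_vecMul, ha,
      vecMulVec_smul, conj_comp_conj_comp]
  · rw [mul_vecMulVec, hAu, map_conj_smul, map_vecMulVec, Matrix.smul_mul, vecMulVec_mul,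
      smul_vecMulVec]

end Conj

section Complex

variable {m n : Type*} [Fintype m] [Fintype n] {A : Matrix m m ℂ} {D : Matrix n n ℂ}

theorem IsConjSylvesterPair.exists_ne_zero {Z W : Matrix m n ℂ}
    (h : IsConjSylvesterPair A D Z W) (hZ : Z ≠ 0) :
    ∃ X : Matrix m n ℂ, X ≠ 0 ∧ A * X = X.map conj * D := by
  by_contra! hX
  have hcomb (ω : ℂ) : ω • Z + conj ω • W = 0 :=
    by_contra fun hne => hX _ hne (h.mul_combination ω)
  have h₁ := hcomb 1
  have hI := hcomb Complex.I
  simp only [map_one, one_smul, Complex.conj_I, neg_smul] at h₁ hI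
  rw [← neg_eq_of_add_eq_zero_right h₁, smul_neg, neg_neg, ← two_smul ℂ, smul_smul] at hI
  exact hZ ((smul_eq_zero.mp hI).resolve_left (mul_ne_zero two_ne_zero Complex.I_ne_zero))

variable [DecidableEq m] [DecidableEq n]

theorem det_eq_zero_of_det_map_conj_mul_self_eq_zero (h : (A.map conj * A).det = 0) :
    A.det = 0 := by
  rwa [det_mul, ← RingHom.mapMatrix_apply, ← RingHom.map_det, mul_eq_zero, map_eq_zero,
    or_self] at h

theorem exists_ne_zero_mul_eq_map_conj_mul_of_det_eq_zero (hA : A.det = 0) (hD : D.det = 0) :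
    ∃ X : Matrix m n ℂ, X ≠ 0 ∧ A * X = X.map conj * D := by
  obtain ⟨u, hu0, hu⟩ := exists_mulVec_eq_zero_iff.mpr hA
  obtain ⟨a, ha0, ha⟩ := exists_vecMul_eq_zero_iff.mpr hD
  refine ⟨vecMulVec u (conj ∘ a), vecMulVec_ne_zero_of_ne_zero hu0 ?_, ?_⟩
  · simpa [funext_iff] using ha0
  · rw [mul_vecMulVec, hu, map_vecMulVec, vecMulVec_mul, conj_comp_conj_comp, ha]
    ext
    simp [vecMulVec_apply]

theorem exists_ne_zero_mul_eq_map_conj_mul {μ : ℂ}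
    (hA : (A.map conj * A - μ • 1).det = 0) (hD : (D.map conj * D - μ • 1).det = 0) :
    ∃ X : Matrix m n ℂ, X ≠ 0 ∧ A * X = X.map conj * D := by
  rcases eq_or_ne μ 0 with rfl | hμ
  · rw [zero_smul, sub_zero] at hA hD
    exact exists_ne_zero_mul_eq_map_conj_mul_of_det_eq_zero
      (det_eq_zero_of_det_map_conj_mul_self_eq_zero hA)
      (det_eq_zero_of_det_map_conj_mul_self_eq_zero hD)
  obtain ⟨u, hu0, hu⟩ := exists_mulVec_eq_zero_iff.mpr hA
  obtain ⟨a, ha0, ha⟩ := exists_vecMul_eq_zero_iff.mpr hD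
  rw [sub_mulVec, smul_mulVec, one_mulVec, sub_eq_zero] at hu
  rw [vecMul_sub, vecMul_smul, vecMul_one, sub_eq_zero] at ha
  exact (isConjSylvesterPair_of_eigenvectors hu ha).exists_ne_zero
    (smul_ne_zero hμ (vecMulVec_ne_zero_of_ne_zero hu0 ha0))

end Complex

def conjSylvester {m n : Type*} [Fintype m] [Fintype n] (A : Matrix m m ℂ)
    (D : Matrix n n ℂ) : Matrix m n ℂ →ₗ[ℝ] Matrix m n ℂ where
  toFun X := A * X - X.map conj * D
  map_add' X Y := by
    rw [Matrix.map_add _ (map_add conj), Matrix.mul_add, Matrix.add_mul]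
    abel
  map_smul' r X := by
    rw [RingHom.id_apply, Matrix.map_smul _ r (fun z => by simp [Complex.real_smul]),
      Matrix.mul_smul, Matrix.smul_mul, smul_sub]

end Matrix

theorem LinearMap.forall_existsUnique_apply_eq_iff {K V : Type*} [DivisionRing K]
    [AddCommGroup V] [Module K V] [FiniteDimensional K V] (f : V →ₗ[K] V) :
    (∀ y, ∃! x, f x = y) ↔ ∀ x, f x = 0 → x = 0 := by
  rw [← Function.bijective_iff_existsUnique, ← injective_iff_map_eq_zero]
  exact ⟨And.left, fun h => ⟨h, injective_iff_surjective.mp h⟩⟩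

/-- The standard conjugate-Sylvester equation `A X - conj(X) D = E` has a unique solution
for every right-hand side `E` iff `conj(A)·A` and `conj(D)·D` have no common eigenvalue. -/
theorem std_conj_sylvester_unique_iff (m n : ℕ)
    (A : Matrix (Fin m) (Fin m) ℂ) (D : Matrix (Fin n) (Fin n) ℂ) :
    (∀ E : Matrix (Fin m) (Fin n) ℂ, ∃! X : Matrix (Fin m) (Fin n) ℂ,
        A * X - (X.map (starRingEnd ℂ)) * D = E)
      ↔
    (∀ μ : ℂ,
        ¬((A.map (starRingEnd ℂ) * A - μ • (1 : Matrix (Fin m) (Fin m) ℂ)).det = 0 ∧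
          (D.map (starRingEnd ℂ) * D - μ • (1 : Matrix (Fin n) (Fin n) ℂ)).det = 0)) := by
  refine (LinearMap.forall_existsUnique_apply_eq_iff (conjSylvester A D)).trans ⟨?_, ?_⟩
  · rintro hker μ ⟨hA, hD⟩
    obtain ⟨X, hX0, hX⟩ := exists_ne_zero_mul_eq_map_conj_mul hA hD
    exact hX0 (hker X (sub_eq_zero.mpr hX))
  · intro h X hX
    exact eq_zero_of_mul_eq_mul_of_isCoprime_charpoly
      (isCoprime_charpoly_of_forall_not_det_eq_zero h)
      (map_conj_mul_self_mul_eq_mul_map_conj_mul_self (sub_eq_zero.mp hX))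
end

section
/- Let A_1 = A_2 = C_1 = C_2 = D_2 = I_2 (the 2×2 identity over ℂ), B_1 = [[0,1],[0,0]], B_2 = [[0,0],[1,0]], and D_1 = [[1,0],[0,0]]. Then the determinant of the 4×4 block pencil [λD_1, B_1; B_2, λD_2] is identically zero (i.e., this pencil is not regular), yet the system A_1 X_1 B_1 − C_1 X_2 D_1 = 0, A_2 X_2 B_2 − C_2 X_1 D_2 = 0, in unknowns X_1, X_2 ∈ ℂ^{2×2}, has only the trivial solution X_1 = X_2 = 0. -/
open Matrix

namespace Example17

def A1 : Matrix (Fin 2) (Fin 2) ℂ := 1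
def A2 : Matrix (Fin 2) (Fin 2) ℂ := 1
def C1 : Matrix (Fin 2) (Fin 2) ℂ := 1
def C2 : Matrix (Fin 2) (Fin 2) ℂ := 1
def D2 : Matrix (Fin 2) (Fin 2) ℂ := 1
def B1 : Matrix (Fin 2) (Fin 2) ℂ := !![0, 1; 0, 0]
def B2 : Matrix (Fin 2) (Fin 2) ℂ := !![0, 0; 1, 0]
def D1 : Matrix (Fin 2) (Fin 2) ℂ := !![1, 0; 0, 0]

/-- The pencil `[λD₁, B₁; B₂, λD₂]` is singular (its determinant vanishes identically),
yet the periodic system `A₁X₁B₁ - C₁X₂D₁ = 0`, `A₂X₂B₂ - C₂X₁D₂ = 0` has only the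
trivial solution. -/
theorem singular_pencil_but_unique_solution :
    (∀ μ : ℂ, (Matrix.fromBlocks (μ • D1) B1 B2 (μ • D2)).det = 0) ∧
    (∀ X1 X2 : Matrix (Fin 2) (Fin 2) ℂ,
        (A1 * X1 * B1 - C1 * X2 * D1 = 0 ∧ A2 * X2 * B2 - C2 * X1 * D2 = 0) →
      X1 = 0 ∧ X2 = 0) := by
  constructor
  · intro μ
    apply Matrix.det_eq_zero_of_row_eq_zero (Sum.inl 1)
    intro j
    rcases j with j | j <;> fin_cases j <;>
      simp [Matrix.fromBlocks, B1, D1]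
  · rintro X1 X2 ⟨h1, h2⟩
    simp only [A1, A2, C1, C2, D2, one_mul, mul_one, sub_eq_zero] at h1 h2
    have e1 := fun i j => congrFun (congrFun h1 i) j
    have e2 := fun i j => congrFun (congrFun h2 i) j
    simp only [Matrix.mul_apply, Fin.sum_univ_two, B1, B2, D1] at e1 e2
    have p1 := e1 0 0; have p2 := e1 1 0; have p3 := e1 0 1; have p4 := e1 1 1
    have q1 := e2 0 0; have q2 := e2 1 0; have q3 := e2 0 1; have q4 := e2 1 1
    simp at p1 p2 p3 p4 q1 q2 q3 q4
    constructor <;> ext i j <;> fin_cases i <;> fin_cases j <;> simp_all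

end Example17
end
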